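/- The third error term is controlled by the L₂ distance: if f† has 1/μ₀-Lipschitz derivative (i.e., f is μ₀-strongly convex) and the density ratio q/p is bounded by θ₁, then |E_Q[t̂ − t*] − E_P[f†(t̂) − f†(t*)]| ≤ C·‖t̂ − t*‖_{L₂(P)} for a constant C depending only on μ₀, θ₁, and the uniform bound M on |t̂|, |t*|. -/

import Mathlib

open MeasureTheory

/-! Since `(f†)'(t*) = q/p`, the integrand `(t̂ - t*) q - (f†(t̂) - f†(t*)) p` is `-p` times the
first-order Taylor remainder of `f†` at `t*`, which the `1/μ₀`-Lipschitz derivative bounds by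
`(t̂ - t*)² / μ₀`. Integrating against `p` bounds the error by `‖t̂ - t*‖²_{L₂(P)} / μ₀`, and the
uniform bound `|t̂ - t*| ≤ 2M` turns one factor of the `L₂` norm into `2M`. -/

theorem abs_sub_sub_mul_le_of_abs_deriv_sub_le {f g : ℝ → ℝ} {L : ℝ}
    (hf : ∀ u, HasDerivAt f (g u) u) (hg : ∀ u v, |g u - g v| ≤ L * |u - v|) (a b : ℝ) :
    |f b - f a - (b - a) * g a| ≤ L * (b - a) ^ 2 := by
  have hL : 0 ≤ L := by simpa using (abs_nonneg _).trans (hg 1 0)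
  have hderiv : ∀ x ∈ Set.uIcc a b, HasDerivWithinAt (fun y => f y - y * g a)
      (g x - g a) (Set.uIcc a b) x := fun x _ =>
    ((hf x).sub ((hasDerivAt_id x).mul_const (g a)) |>.congr_deriv (by simp)).hasDerivWithinAt
  have hbound : ∀ x ∈ Set.uIcc a b, ‖g x - g a‖ ≤ L * |b - a| := fun x hx =>
    (hg x a).trans (mul_le_mul_of_nonneg_left (Set.abs_sub_left_of_mem_uIcc hx) hL)
  calc |f b - f a - (b - a) * g a| = ‖(f b - b * g a) - (f a - a * g a)‖ := by
        rw [Real.norm_eq_abs]; ring_nf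
    _ ≤ L * |b - a| * ‖b - a‖ :=
        (convex_uIcc a b).norm_image_sub_le_of_norm_hasDerivWithin_le hderiv hbound
          Set.left_mem_uIcc Set.right_mem_uIcc
    _ = L * (b - a) ^ 2 := by rw [Real.norm_eq_abs, mul_assoc, abs_mul_abs_self, sq]

theorem abs_sub_mul_sub_sub_mul_le {f g : ℝ → ℝ} {L : ℝ}
    (hf : ∀ u, HasDerivAt f (g u) u) (hg : ∀ u v, |g u - g v| ≤ L * |u - v|)
    {s t p q : ℝ} (hp : 0 < p) (ht : g t = q / p) :
    |(s - t) * q - (f s - f t) * p| ≤ L * ((s - t) ^ 2 * p) := by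
  have hremainder : (s - t) * q - (f s - f t) * p = -((f s - f t - (s - t) * g t) * p) := by
    rw [ht]; field_simp; ring
  rw [hremainder, abs_neg, abs_mul, abs_of_pos hp, ← mul_assoc]
  exact mul_le_mul_of_nonneg_right (abs_sub_sub_mul_le_of_abs_deriv_sub_le hf hg t s) hp.le

theorem integral_sq_mul_le_sq_of_abs_le {Ω : Type*} [MeasurableSpace Ω] {μ : Measure Ω}
    {h p : Ω → ℝ} {K : ℝ} (hp : ∀ x, 0 ≤ p x) (hp1 : ∫ x, p x ∂μ = 1) (hh : ∀ x, |h x| ≤ K)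
    (hint : Integrable (fun x => h x ^ 2 * p x) μ) :
    ∫ x, h x ^ 2 * p x ∂μ ≤ K ^ 2 := by
  have hpint : Integrable p μ := Integrable.of_integral_ne_zero (by rw [hp1]; exact one_ne_zero)
  have hpointwise : ∀ x, h x ^ 2 * p x ≤ K ^ 2 * p x := fun x =>
    mul_le_mul_of_nonneg_right
      (by simpa only [sq_abs] using pow_le_pow_left₀ (abs_nonneg (h x)) (hh x) 2) (hp x)
  calc ∫ x, h x ^ 2 * p x ∂μ ≤ ∫ x, K ^ 2 * p x ∂μ :=
        integral_mono hint (hpint.const_mul _) hpointwise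
    _ = K ^ 2 := by rw [integral_const_mul, hp1, mul_one]

theorem le_mul_sqrt_of_le_sq {S K : ℝ} (hS : 0 ≤ S) (hK : 0 ≤ K) (h : S ≤ K ^ 2) :
    S ≤ K * Real.sqrt S := by
  calc S = Real.sqrt S * Real.sqrt S := (Real.mul_self_sqrt hS).symm
    _ ≤ K * Real.sqrt S :=
        mul_le_mul_of_nonneg_right ((Real.sqrt_le_left hK).2 h) (Real.sqrt_nonneg S)

theorem third_error_term_L2_control_general
    (μ₀ θ₀ θ₁ M : ℝ) (hμ₀ : 0 < μ₀) (hM : 0 < M) :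
    ∃ C : ℝ, 0 < C ∧
      ∀ (Ω : Type) (_ : MeasurableSpace Ω) (μ : Measure Ω)
        (f' fconj g : ℝ → ℝ) (p q that : Ω → ℝ),
        (∀ u : ℝ, HasDerivAt fconj (g u) u) →
        (∀ u₁ u₂ : ℝ, |g u₁ - g u₂| ≤ (1 / μ₀) * |u₁ - u₂|) →
        (∀ x, 0 < p x) → (∀ x, 0 < q x) →
        (∀ x, q x / p x ∈ Set.Icc θ₀ θ₁) →
        (∫ x, p x ∂μ = 1) → (∫ x, q x ∂μ = 1) →
        (∀ x, g (f' (q x / p x)) = q x / p x) →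
        (∀ x, |that x| ≤ M) → (∀ x, |f' (q x / p x)| ≤ M) →
        Integrable (fun x => (that x - f' (q x / p x)) * q x) μ →
        Integrable (fun x => (fconj (that x) - fconj (f' (q x / p x))) * p x) μ →
        Integrable (fun x => (that x - f' (q x / p x)) ^ 2 * p x) μ →
        |∫ x, (that x - f' (q x / p x)) * q x ∂μ -
            ∫ x, (fconj (that x) - fconj (f' (q x / p x))) * p x ∂μ| ≤
          C * Real.sqrt (∫ x, (that x - f' (q x / p x)) ^ 2 * p x ∂μ) := by
  refine ⟨2 * M / μ₀, by positivity, ?_⟩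
  intro Ω _ μ f' fconj g p q that hderiv hLip hp _ _ hp1 _ hratio hthat ht hI1 hI2 hI3
  set t : Ω → ℝ := fun x => f' (q x / p x)
  set S : ℝ := ∫ x, (that x - t x) ^ 2 * p x ∂μ
  have hdist : ∀ x, |that x - t x| ≤ 2 * M := fun x =>
    (abs_sub _ _).trans ((add_le_add (hthat x) (ht x)).trans_eq (two_mul M).symm)
  have hS : S ≤ 2 * M * Real.sqrt S :=
    le_mul_sqrt_of_le_sq (integral_nonneg fun x => mul_nonneg (sq_nonneg _) (hp x).le)
      (by positivity) (integral_sq_mul_le_sq_of_abs_le (fun x => (hp x).le) hp1 hdist hI3)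
  calc |∫ x, (that x - t x) * q x ∂μ - ∫ x, (fconj (that x) - fconj (t x)) * p x ∂μ|
      = |∫ x, ((that x - t x) * q x - (fconj (that x) - fconj (t x)) * p x) ∂μ| := by
        rw [integral_sub hI1 hI2]
    _ ≤ ∫ x, |(that x - t x) * q x - (fconj (that x) - fconj (t x)) * p x| ∂μ :=
        abs_integral_le_integral_abs
    _ ≤ ∫ x, 1 / μ₀ * ((that x - t x) ^ 2 * p x) ∂μ :=
        integral_mono (hI1.sub hI2).abs (hI3.const_mul _) fun x =>
          abs_sub_mul_sub_sub_mul_le hderiv hLip (hp x) (hratio x)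
    _ = 1 / μ₀ * S := integral_const_mul _ _
    _ ≤ 1 / μ₀ * (2 * M * Real.sqrt S) := by gcongr
    _ = 2 * M / μ₀ * Real.sqrt S := by ring

theorem third_error_term_L2_control
    (μ₀ θ₀ θ₁ M : ℝ) (hμ₀ : 0 < μ₀) (hθ₀ : 0 < θ₀) (hθ : θ₀ ≤ θ₁) (hM : 0 < M) :
    ∃ C : ℝ, 0 < C ∧
      ∀ (Ω : Type) (_ : MeasurableSpace Ω) (μ : Measure Ω)
        (f' fconj g : ℝ → ℝ) (p q that : Ω → ℝ),
        (∀ u : ℝ, HasDerivAt fconj (g u) u) →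
        (∀ u₁ u₂ : ℝ, |g u₁ - g u₂| ≤ (1 / μ₀) * |u₁ - u₂|) →
        (∀ x, 0 < p x) → (∀ x, 0 < q x) →
        (∀ x, q x / p x ∈ Set.Icc θ₀ θ₁) →
        (∫ x, p x ∂μ = 1) → (∫ x, q x ∂μ = 1) →
        (∀ x, g (f' (q x / p x)) = q x / p x) →
        (∀ x, |that x| ≤ M) → (∀ x, |f' (q x / p x)| ≤ M) →
        Integrable (fun x => (that x - f' (q x / p x)) * q x) μ →
        Integrable (fun x => (fconj (that x) - fconj (f' (q x / p x))) * p x) μ →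
        Integrable (fun x => (that x - f' (q x / p x)) ^ 2 * p x) μ →
        |∫ x, (that x - f' (q x / p x)) * q x ∂μ -
            ∫ x, (fconj (that x) - fconj (f' (q x / p x))) * p x ∂μ| ≤
          C * Real.sqrt (∫ x, (that x - f' (q x / p x)) ^ 2 * p x ∂μ) :=
  third_error_term_L2_control_general μ₀ θ₀ θ₁ M hμ₀ hM
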